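/- arXiv:1410.1435 — 2 statements merged into one kernel-verified Lean document; each statement's English description precedes it below -/
import Mathlib

section
/- Let G be an n-vertex graph with a μn-bounded incompatibility system F. Then for every path P in G, there are at most √μ·n vertices of G that are 2√μ-bad for P, and likewise for every cycle C in G there are at most √μ·n vertices that are 2√μ-bad for C. -/
open Real

variable {V : Type*}

/-- An incompatibility system over a graph `G`: for each vertex `v`, a symmetric
relation on edges of `G`, where related edges are distinct and meet exactly at `v`. -/
structure IncompSys (G : SimpleGraph V) where
  incomp : V → Sym2 V → Sym2 V → Prop
  symm : ∀ v e e', incomp v e e' → incomp v e' e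
  edge_left : ∀ v e e', incomp v e e' → e ∈ G.edgeSet
  edge_right : ∀ v e e', incomp v e e' → e' ∈ G.edgeSet
  ne : ∀ v e e', incomp v e e' → e ≠ e'
  mem_left : ∀ v e e', incomp v e e' → v ∈ e
  mem_right : ∀ v e e', incomp v e e' → v ∈ e'

/-- Two edges are incompatible if they form a pair in some `F_v`. -/
def IncompSys.Incomp {G : SimpleGraph V} (F : IncompSys G) (e e' : Sym2 V) : Prop :=
  ∃ v, F.incomp v e e'

/-- `F` is `Δ`-bounded: for each vertex `v` and edge `e` at `v`, at most `Δ`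
pairs of `F_v` contain `e`. -/
def IncompSys.Bounded {G : SimpleGraph V} (F : IncompSys G) (Δ : ℝ) : Prop :=
  ∀ (v : V) (e : Sym2 V), v ∈ e → e ∈ G.edgeSet →
    (({e' | F.incomp v e e'}).ncard : ℝ) ≤ Δ

/-- The edges of a path given by its list of vertices. -/
def pathEdges (L : List V) : List (Sym2 V) :=
  (L.zip L.tail).map fun p => s(p.1, p.2)

/-- Closing up a vertex list into a cyclic order. -/
def closeList (L : List V) : List V := L ++ L.take 1

/-- The edges of a cycle given by its list of vertices. -/
def cycleEdges (L : List V) : List (Sym2 V) := pathEdges (closeList L)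

/-- `L` is the vertex list of a path in `G`. -/
def IsPathList (G : SimpleGraph V) (L : List V) : Prop :=
  L ≠ [] ∧ L.Chain' G.Adj ∧ L.Nodup

/-- `L` is the vertex list of a cycle in `G`. -/
def IsCycleList (G : SimpleGraph V) (L : List V) : Prop :=
  3 ≤ L.length ∧ L.Nodup ∧ (closeList L).Chain' G.Adj

/-- `L` is the vertex list of a Hamilton cycle in `G`. -/
def IsHamCycleList (G : SimpleGraph V) (L : List V) : Prop :=
  IsCycleList G L ∧ ∀ v : V, v ∈ L

/-- A list of edges (of a path or a cycle) is compatible with `F` if all pairs of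
distinct edges in it are compatible (incident pairs are the only ones that can be
incompatible anyway). -/
def CompatEdges {G : SimpleGraph V} (F : IncompSys G) (es : List (Sym2 V)) : Prop :=
  ∀ e ∈ es, ∀ e' ∈ es, e ≠ e' → ¬ F.Incomp e e'

/-- The set of bad neighbors of `w` with respect to a list of edges `es` (of a path
or a cycle): vertices `u` adjacent to `w` such that the edge `{w,u}` is incompatible
with an edge of `es` containing `u`. -/
def badNbrSet {G : SimpleGraph V} (F : IncompSys G) (es : List (Sym2 V)) (w : V) : Set V :=
  {u | G.Adj w u ∧ ∃ e ∈ es, u ∈ e ∧ F.Incomp s(w, u) e}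

/-- `w` is `γ`-bad for the path `L`: it has at least `γ|L|` bad neighbors in `L`. -/
def GammaBadPath {G : SimpleGraph V} (F : IncompSys G) (γ : ℝ) (L : List V) (w : V) : Prop :=
  γ * (L.length : ℝ) ≤ ((badNbrSet F (pathEdges L) w).ncard : ℝ)

/-- `w` is `γ`-bad for the cycle `L`: it has at least `γ|L|` bad neighbors in `L`. -/
def GammaBadCycle {G : SimpleGraph V} (F : IncompSys G) (γ : ℝ) (L : List V) (w : V) : Prop :=
  γ * (L.length : ℝ) ≤ ((badNbrSet F (cycleEdges L) w).ncard : ℝ)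

/-- `v₁` and `v₂` are `γ`-correlated: at least `γn` vertices `w` are joined to both
`v₁` and `v₂` by a pair of incompatible edges. -/
def Correlated [Fintype V] (G : SimpleGraph V) (F : IncompSys G) (γ : ℝ) (v₁ v₂ : V) : Prop :=
  γ * (Fintype.card V : ℝ) ≤
    (({w | G.Adj v₁ w ∧ G.Adj v₂ w ∧ F.Incomp s(v₁, w) s(v₂, w)}).ncard : ℝ)

/-- A path is smoothly compatible with `F` (smooth): it is a compatible path, both of
its endpoints are `8√μ`-good for it, and its endpoints are `√μ`-uncorrelated. -/
def SmoothPath [Fintype V] (G : SimpleGraph V) (F : IncompSys G) (μ : ℝ) (L : List V) : Prop :=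
  IsPathList G L ∧ CompatEdges F (pathEdges L) ∧
  (∀ x ∈ L.head?, ¬ GammaBadPath F (8 * Real.sqrt μ) L x) ∧
  (∀ y ∈ L.getLast?, ¬ GammaBadPath F (8 * Real.sqrt μ) L y) ∧
  (∀ x ∈ L.head?, ∀ y ∈ L.getLast?, ¬ Correlated G F (Real.sqrt μ) x y)

/-- `e(X,Y)`: the number of edges with one endpoint in `X` and the other in `Y`,
counted with multiplicity (counted as ordered pairs `(x,y) ∈ X × Y` of adjacent
vertices, so edges inside `X ∩ Y` are counted twice). -/
noncomputable def eXY (G : SimpleGraph V) (A B : Set V) : ℕ :=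
  ({p : V × V | p.1 ∈ A ∧ p.2 ∈ B ∧ G.Adj p.1 p.2}).ncard

/-- Auxiliary: for a fixed vertex `u` and edge `e` containing `u`, the number of `w`
with `s(w,u)` incompatible with `e` is at most `μn`, by injecting into the set of
edges incompatible with `e` at `u`. -/
private lemma stmt1_lemA [Fintype V] (G : SimpleGraph V) (μ : ℝ) (hμ : 0 < μ)
    (F : IncompSys G) (hF : F.Bounded (μ * Fintype.card V))
    (u : V) (e : Sym2 V) (hu : u ∈ e) :
    (({w : V | F.Incomp s(w, u) e}).ncard : ℝ) ≤ μ * Fintype.card V := by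
  classical
  have hμn : (0 : ℝ) ≤ μ * Fintype.card V := by positivity
  rcases Set.eq_empty_or_nonempty {w : V | F.Incomp s(w, u) e} with h | ⟨w0, hw0⟩
  · simp [h, hμn]
  obtain ⟨v0, hv0⟩ := hw0
  have he : e ∈ G.edgeSet := F.edge_right _ _ _ hv0
  have key : ∀ w : V, F.Incomp s(w, u) e → w ≠ u ∧ F.incomp u e s(w, u) := by
    rintro w ⟨v, hv⟩
    have hedge : s(w, u) ∈ G.edgeSet := F.edge_left _ _ _ hv
    have hwu : w ≠ u := by
      rintro rfl
      exact G.irrefl (G.mem_edgeSet.1 hedge)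
    refine ⟨hwu, ?_⟩
    have hv1 : v ∈ s(w, u) := F.mem_left _ _ _ hv
    rcases Sym2.mem_iff.1 hv1 with h1 | h1
    · -- v = w : contradiction, since then e = s(w,u)
      exfalso
      subst h1
      have hwe : v ∈ e := F.mem_right _ _ _ hv
      have : e = s(u, v) := (Sym2.mem_and_mem_iff (Ne.symm hwu)).1 ⟨hu, hwe⟩
      exact F.ne _ _ _ hv (by rw [this, Sym2.eq_swap])
    · subst h1
      exact F.symm _ _ _ hv
  have hinj : Set.InjOn (fun w => s(w, u)) {w : V | F.Incomp s(w, u) e} := by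
    intro a ha b hb hab
    have ha' := (key a ha).1
    simp only [Sym2.eq, Sym2.rel_iff', Prod.mk.injEq, Prod.swap_prod_mk] at hab
    rcases hab with ⟨h1, _⟩ | ⟨h1, h2⟩
    · exact h1
    · exact absurd h1 ha'
  have hsub : (fun w => s(w, u)) '' {w : V | F.Incomp s(w, u) e} ⊆
      {e' | F.incomp u e e'} := by
    rintro _ ⟨w, hw, rfl⟩
    exact (key w hw).2
  calc (({w : V | F.Incomp s(w, u) e}).ncard : ℝ)
      = (((fun w => s(w, u)) '' {w : V | F.Incomp s(w, u) e}).ncard : ℝ) := by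
        rw [Set.ncard_image_of_injOn hinj]
    _ ≤ (({e' | F.incomp u e e'}).ncard : ℝ) := by
        exact_mod_cast Set.ncard_le_ncard hsub (Set.toFinite _)
    _ ≤ μ * Fintype.card V := hF u e hu he

private lemma stmt1_key [Fintype V] (G : SimpleGraph V) (μ : ℝ) (hμ : 0 < μ)
    (F : IncompSys G) (hF : F.Bounded (μ * Fintype.card V))
    (es : List (Sym2 V)) (ℓ : ℕ) (hes : es.length ≤ ℓ) (hℓ : 0 < ℓ) :
    (({w : V | 2 * Real.sqrt μ * (ℓ : ℝ) ≤ ((badNbrSet F es w).ncard : ℝ)}).ncard : ℝ) ≤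
      Real.sqrt μ * Fintype.card V := by
  classical
  set n := Fintype.card V with hn
  have hμn : (0 : ℝ) ≤ μ * n := by positivity
  set B : Finset V :=
    Finset.univ.filter (fun w => 2 * Real.sqrt μ * (ℓ : ℝ) ≤ ((badNbrSet F es w).ncard : ℝ))
    with hBdef
  have hBcard : ({w : V | 2 * Real.sqrt μ * (ℓ : ℝ) ≤ ((badNbrSet F es w).ncard : ℝ)}).ncard
      = B.card := by
    rw [← Set.ncard_coe_finset]
    congr 1
    ext w
    simp [hBdef]
  rw [hBcard]
  -- Finset versions of the relevant sets
  set N : V → Finset V := fun w => Finset.univ.filter (fun u => u ∈ badNbrSet F es w) with hN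
  set M : V → Sym2 V → Finset V :=
    fun w e => Finset.univ.filter (fun u => u ∈ e ∧ F.Incomp s(w, u) e) with hM
  have hNcard : ∀ w : V, (badNbrSet F es w).ncard = (N w).card := by
    intro w
    rw [← Set.ncard_coe_finset]
    congr 1
    ext u
    simp [hN]
  -- step 1: lower bound
  have step1 : (B.card : ℝ) * (2 * Real.sqrt μ * (ℓ : ℝ)) ≤ ∑ w ∈ B, ((N w).card : ℝ) := by
    have hb : ∀ w ∈ B, 2 * Real.sqrt μ * (ℓ : ℝ) ≤ ((N w).card : ℝ) := by
      intro w hw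
      rw [hBdef] at hw
      simp only [Finset.mem_filter] at hw
      show 2 * Real.sqrt μ * (ℓ : ℝ) ≤ ((N w).card : ℝ)
      rw [← hNcard w]
      exact_mod_cast hw.2
    have h := Finset.card_nsmul_le_sum B (fun w => ((N w).card : ℝ))
      (2 * Real.sqrt μ * (ℓ : ℝ)) hb
    rw [nsmul_eq_mul] at h
    linarith
  -- step 2: union bound over edges
  have step2 : ∀ w : V, (N w).card ≤ ∑ e ∈ es.toFinset, (M w e).card := by
    intro w
    have hsub : N w ⊆ es.toFinset.biUnion (fun e => M w e) := by
      intro u hu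
      rw [hN] at hu
      simp only [Finset.mem_filter, Finset.mem_univ, true_and] at hu
      obtain ⟨-, e, he, hue, hinc⟩ := hu
      exact Finset.mem_biUnion.2 ⟨e, List.mem_toFinset.2 he, by simp [hM, hue, hinc]⟩
    exact (Finset.card_le_card hsub).trans (Finset.card_biUnion_le)
  -- step 4: per-edge bound
  have step4 : ∀ e : Sym2 V, (∑ w ∈ B, ((M w e).card : ℝ)) ≤ 2 * (μ * n) := by
    intro e
    have swap : (∑ w ∈ B, (M w e).card) =
        ∑ u ∈ Finset.univ.filter (· ∈ e), (B.filter (fun w => F.Incomp s(w, u) e)).card := by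
      simp only [hM, Finset.card_filter]
      rw [Finset.sum_comm]
      rw [Finset.sum_filter]
      apply Finset.sum_congr rfl
      intro u _
      split_ifs with h
      · apply Finset.sum_congr rfl
        intro w _
        simp [h]
      · apply Finset.sum_eq_zero
        intro w _
        simp [h]
    have bnd : ∀ u : V, u ∈ e →
        ((B.filter (fun w => F.Incomp s(w, u) e)).card : ℝ) ≤ μ * n := by
      intro u hu
      have h1 : (B.filter (fun w => F.Incomp s(w, u) e)).card ≤
          ({w : V | F.Incomp s(w, u) e}).ncard := by
        rw [← Set.ncard_coe_finset]
        apply Set.ncard_le_ncard _ (Set.toFinite _)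
        intro w hw
        simp only [Finset.coe_filter, Set.mem_setOf_eq] at hw
        exact hw.2
      calc ((B.filter (fun w => F.Incomp s(w, u) e)).card : ℝ)
          ≤ (({w : V | F.Incomp s(w, u) e}).ncard : ℝ) := by exact_mod_cast h1
        _ ≤ μ * n := stmt1_lemA G μ hμ F hF u e hu
    have hecard : (Finset.univ.filter (· ∈ e)).card ≤ 2 := by
      induction e using Sym2.ind with
      | _ a b =>
        have : (Finset.univ.filter (· ∈ s(a, b))) ⊆ {a, b} := by
          intro x hx
          simp only [Finset.mem_filter, Sym2.mem_iff] at hx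
          simp [hx.2]
        exact (Finset.card_le_card this).trans ((Finset.card_insert_le _ _).trans (by simp))
    calc (∑ w ∈ B, ((M w e).card : ℝ))
        = ∑ u ∈ Finset.univ.filter (· ∈ e),
            ((B.filter (fun w => F.Incomp s(w, u) e)).card : ℝ) := by
          exact_mod_cast congrArg (Nat.cast (R := ℝ)) swap
      _ ≤ ∑ u ∈ Finset.univ.filter (· ∈ e), (μ * n) := by
          apply Finset.sum_le_sum
          intro u hu
          exact bnd u (by simpa using (Finset.mem_filter.1 hu).2)
      _ = (Finset.univ.filter (· ∈ e)).card * (μ * n) := by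
          rw [Finset.sum_const, nsmul_eq_mul]
      _ ≤ 2 * (μ * n) := by
          apply mul_le_mul_of_nonneg_right _ hμn
          exact_mod_cast hecard
  -- combine
  have main : (B.card : ℝ) * (2 * Real.sqrt μ * (ℓ : ℝ)) ≤ (ℓ : ℝ) * (2 * (μ * n)) := by
    calc (B.card : ℝ) * (2 * Real.sqrt μ * (ℓ : ℝ))
        ≤ ∑ w ∈ B, ((N w).card : ℝ) := step1
      _ ≤ ∑ w ∈ B, ∑ e ∈ es.toFinset, ((M w e).card : ℝ) := by
          apply Finset.sum_le_sum
          intro w _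
          exact_mod_cast step2 w
      _ = ∑ e ∈ es.toFinset, ∑ w ∈ B, ((M w e).card : ℝ) := Finset.sum_comm
      _ ≤ ∑ e ∈ es.toFinset, (2 * (μ * n)) := Finset.sum_le_sum fun e _ => step4 e
      _ = (es.toFinset.card : ℝ) * (2 * (μ * n)) := by rw [Finset.sum_const, nsmul_eq_mul]
      _ ≤ (ℓ : ℝ) * (2 * (μ * n)) := by
          apply mul_le_mul_of_nonneg_right _ (by positivity)
          exact_mod_cast (es.toFinset_card_le).trans hes
  have hs : (0 : ℝ) < Real.sqrt μ := Real.sqrt_pos.2 hμ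
  have hℓR : (0 : ℝ) < (ℓ : ℝ) := by exact_mod_cast hℓ
  have hμeq : Real.sqrt μ * Real.sqrt μ = μ := Real.mul_self_sqrt hμ.le
  have h2 : (B.card : ℝ) * (2 * Real.sqrt μ * (ℓ : ℝ)) ≤
      (Real.sqrt μ * (n : ℝ)) * (2 * Real.sqrt μ * (ℓ : ℝ)) := by
    calc (B.card : ℝ) * (2 * Real.sqrt μ * (ℓ : ℝ)) ≤ (ℓ : ℝ) * (2 * (μ * n)) := main
      _ = (Real.sqrt μ * (n : ℝ)) * (2 * Real.sqrt μ * (ℓ : ℝ)) := by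
          have h3 : (Real.sqrt μ * (n : ℝ)) * (2 * Real.sqrt μ * (ℓ : ℝ)) =
              (ℓ : ℝ) * (2 * ((Real.sqrt μ * Real.sqrt μ) * n)) := by ring
          rw [h3, hμeq]
  exact le_of_mul_le_mul_right h2 (by positivity)

/-- In an `n`-vertex graph with a `μn`-bounded incompatibility
system, for every path at most `√μ·n` vertices are `2√μ`-bad for it, and likewise
for every cycle. -/
theorem stmt1 [Fintype V] (G : SimpleGraph V) (μ : ℝ) (hμ : 0 < μ)
    (F : IncompSys G) (hF : F.Bounded (μ * Fintype.card V)) :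
    (∀ L : List V, IsPathList G L →
      (({w : V | GammaBadPath F (2 * Real.sqrt μ) L w}).ncard : ℝ) ≤
        Real.sqrt μ * Fintype.card V) ∧
    (∀ L : List V, IsCycleList G L →
      (({w : V | GammaBadCycle F (2 * Real.sqrt μ) L w}).ncard : ℝ) ≤
        Real.sqrt μ * Fintype.card V) := by
  constructor
  · intro L hL
    have hℓ : 0 < L.length := List.length_pos_iff.2 hL.1
    have hes : (pathEdges L).length ≤ L.length := by
      simp [pathEdges, List.length_zip]
    simpa only [GammaBadPath] using
      stmt1_key G μ hμ F hF (pathEdges L) L.length hes hℓ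
  · intro L hL
    have h3 : 3 ≤ L.length := hL.1
    have hℓ : 0 < L.length := by omega
    have hes : (cycleEdges L).length ≤ L.length := by
      simp [cycleEdges, pathEdges, closeList, List.length_zip]
    simpa only [GammaBadCycle] using
      stmt1_key G μ hμ F hF (cycleEdges L) L.length hes hℓ
end

section
/- Let ν, η > 0 be reals with 110ν + 250η < 1/2000. Let G be an n-vertex graph of minimum degree at least n/2, and suppose there exist disjoint vertex sets A' and B' with |A'|, |B'| ≥ (1/2 − ν − (3/2)η)n and e(A',B') ≤ ηn². Then there exists a partition of the vertex set of G into W and W^c such that: (1/2 − 7ν − (33/2)η)n ≤ |W| ≤ (1/2 + 7ν + (33/2)η)n; every vertex has more than n/6 neighbors in its own part (so the induced subgraphs G[W] and G[W^c] have minimum degree at least n/6); and e(W, W^c) ≤ (ν + (5/2)η)n². -/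
open Real

variable {V : Type*}

section AuxStmt15
variable [Fintype V] [DecidableEq V] (G : SimpleGraph V) [DecidableRel G.Adj]

private def myN (v : V) : Finset V := Finset.univ.filter (G.Adj v)

private def cutF (A : Finset V) : ℕ := ∑ v ∈ A, (myN G v ∩ Aᶜ).card

private lemma adj_count (v : V) (S : Finset V) :
    ∑ u ∈ S, (if G.Adj u v then 1 else 0) = (myN G v ∩ S).card := by
  rw [Finset.sum_boole, Nat.cast_id]
  congr 1
  ext u; simp [myN, G.adj_comm, and_comm]

private lemma cut_erase (A : Finset V) (v : V) (hv : v ∈ A) :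
    cutF G (A.erase v) + (myN G v ∩ Aᶜ).card = cutF G A + (myN G v ∩ A).card := by
  have hcompl : (A.erase v)ᶜ = insert v Aᶜ := by
    ext u; by_cases hu : u = v <;> simp [hu, hv]
  have hterm : ∀ u ∈ A.erase v,
      (myN G u ∩ (A.erase v)ᶜ).card = (myN G u ∩ Aᶜ).card + (if G.Adj u v then 1 else 0) := by
    intro u hu
    rw [hcompl]
    by_cases h : v ∈ myN G u
    · rw [Finset.inter_insert_of_mem h, Finset.card_insert_of_notMem (by simp [hv]),
        if_pos (by simpa [myN] using h)]
    · rw [Finset.inter_insert_of_notMem h, if_neg (by simpa [myN] using h), add_zero]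
  have h1 : cutF G (A.erase v) = (∑ u ∈ A.erase v, (myN G u ∩ Aᶜ).card)
      + (myN G v ∩ A.erase v).card := by
    rw [cutF, Finset.sum_congr rfl hterm, Finset.sum_add_distrib, adj_count]
  have h2 : myN G v ∩ A.erase v = myN G v ∩ A := by
    ext u; by_cases hu : u = v <;> simp [hu, myN]
  have h3 : (∑ u ∈ A.erase v, (myN G u ∩ Aᶜ).card) + (myN G v ∩ Aᶜ).card = cutF G A := by
    rw [cutF, Finset.sum_erase_add _ _ hv]
  rw [h1, h2] at *
  omega
private lemma cut_insert (A : Finset V) (v : V) (hv : v ∉ A) :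
    cutF G (insert v A) + (myN G v ∩ A).card = cutF G A + (myN G v ∩ Aᶜ).card := by
  have hcompl : (insert v A)ᶜ = Aᶜ.erase v := by
    ext u; by_cases hu : u = v <;> simp [hu, hv]
  have hterm : ∀ u ∈ A,
      (myN G u ∩ (insert v A)ᶜ).card + (if G.Adj u v then 1 else 0) = (myN G u ∩ Aᶜ).card := by
    intro u hu
    rw [hcompl]
    by_cases h : v ∈ myN G u
    · have hmem : v ∈ myN G u ∩ Aᶜ := by simp [h, hv]
      have : myN G u ∩ Aᶜ.erase v = (myN G u ∩ Aᶜ).erase v := by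
        ext w; by_cases hw : w = v <;> simp [hw]
      rw [this, if_pos (by simpa [myN] using h), Finset.card_erase_add_one hmem]
    · have : myN G u ∩ Aᶜ.erase v = myN G u ∩ Aᶜ := by
        ext w; by_cases hw : w = v <;> simp [hw, h]
      rw [this, if_neg (by simpa [myN] using h), add_zero]
  have hvv : v ∉ myN G v := by simp [myN]
  have h1 : cutF G (insert v A) = (myN G v ∩ Aᶜ.erase v).card
      + ∑ u ∈ A, (myN G u ∩ (insert v A)ᶜ).card := by
    rw [cutF, Finset.sum_insert hv, hcompl]
  have h2 : myN G v ∩ Aᶜ.erase v = myN G v ∩ Aᶜ := by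
    ext w; by_cases hw : w = v <;> simp [hw, hvv]
  have h3 : (∑ u ∈ A, (myN G u ∩ (insert v A)ᶜ).card) + (myN G v ∩ A).card = cutF G A := by
    have := Finset.sum_congr rfl hterm
    rw [Finset.sum_add_distrib, adj_count] at this
    rw [cutF]; exact this
  rw [h1, h2]
  omega

private lemma swap_sum (S T : Finset V) :
    ∑ v ∈ S, (myN G v ∩ T).card = ∑ u ∈ T, (myN G u ∩ S).card := by
  have h : ∀ (S T : Finset V), ∑ v ∈ S, (myN G v ∩ T).card
      = ∑ v ∈ S, ∑ u ∈ T, (if G.Adj v u then 1 else 0) := by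
    intro S T
    refine Finset.sum_congr rfl fun v _ => ?_
    rw [Finset.sum_boole, Nat.cast_id]
    congr 1
    ext u; simp [myN, and_comm]
  rw [h, h, Finset.sum_comm]
  refine Finset.sum_congr rfl fun u _ => Finset.sum_congr rfl fun v _ => ?_
  simp [G.adj_comm]


private lemma eXY_eq (A B : Finset V) : eXY G ↑A ↑B = ∑ v ∈ A, (myN G v ∩ B).card := by
  have hset : {p : V × V | p.1 ∈ (A:Set V) ∧ p.2 ∈ (B:Set V) ∧ G.Adj p.1 p.2}
      = ↑((A ×ˢ B).filter fun p => G.Adj p.1 p.2) := by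
    ext ⟨x, y⟩; simp [Finset.mem_product, and_assoc]
  rw [eXY, hset, Set.ncard_coe_finset]
  rw [Finset.card_filter, Finset.sum_product]
  refine Finset.sum_congr rfl fun v _ => ?_
  rw [Finset.sum_boole, Nat.cast_id]
  congr 1
  ext u; simp [myN, and_comm]

private lemma card_split (v : V) (A : Finset V) :
    (myN G v ∩ A).card + (myN G v ∩ Aᶜ).card = (myN G v).card := by
  have h : myN G v ∩ Aᶜ = myN G v \ A := by ext u; simp
  rw [h, Finset.card_inter_add_card_sdiff]

private lemma step_erase (hdeg : ∀ v : V, (Fintype.card V : ℝ)/2 ≤ ((myN G v).card : ℝ))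
    (A : Finset V) (v : V) (hv : v ∈ A)
    (hbad : ((myN G v ∩ A).card : ℝ) ≤ (Fintype.card V : ℝ)/6) :
    (cutF G (A.erase v) : ℝ) + (Fintype.card V : ℝ)/6 ≤ (cutF G A : ℝ) := by
  have hid := cut_erase G A v hv
  have hsplit := card_split G v A
  have hd := hdeg v
  have hcast : (cutF G (A.erase v) : ℝ) + ((myN G v ∩ Aᶜ).card : ℝ)
      = (cutF G A : ℝ) + ((myN G v ∩ A).card : ℝ) := by exact_mod_cast hid
  have hcast2 : ((myN G v ∩ A).card : ℝ) + ((myN G v ∩ Aᶜ).card : ℝ) = ((myN G v).card : ℝ) := by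
    exact_mod_cast hsplit
  linarith

private lemma step_insert (hdeg : ∀ v : V, (Fintype.card V : ℝ)/2 ≤ ((myN G v).card : ℝ))
    (A : Finset V) (v : V) (hv : v ∉ A)
    (hbad : ((myN G v ∩ Aᶜ).card : ℝ) ≤ (Fintype.card V : ℝ)/6) :
    (cutF G (insert v A) : ℝ) + (Fintype.card V : ℝ)/6 ≤ (cutF G A : ℝ) := by
  have hid := cut_insert G A v hv
  have hsplit := card_split G v A
  have hd := hdeg v
  have hcast : (cutF G (insert v A) : ℝ) + ((myN G v ∩ A).card : ℝ)
      = (cutF G A : ℝ) + ((myN G v ∩ Aᶜ).card : ℝ) := by exact_mod_cast hid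
  have hcast2 : ((myN G v ∩ A).card : ℝ) + ((myN G v ∩ Aᶜ).card : ℝ) = ((myN G v).card : ℝ) := by
    exact_mod_cast hsplit
  linarith

private lemma process (hn : 0 < Fintype.card V)
    (hdeg : ∀ v : V, (Fintype.card V : ℝ)/2 ≤ ((myN G v).card : ℝ)) :
    ∀ (k : ℕ) (A : Finset V), cutF G A ≤ k →
    ∃ W : Finset V,
      (∀ v ∈ W, (Fintype.card V : ℝ)/6 < ((myN G v ∩ W).card : ℝ)) ∧
      (∀ v ∈ Wᶜ, (Fintype.card V : ℝ)/6 < ((myN G v ∩ Wᶜ).card : ℝ)) ∧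
      cutF G W ≤ cutF G A ∧
      (W.card : ℝ) ≤ (A.card : ℝ) + 6*((cutF G A : ℝ) - (cutF G W : ℝ))/(Fintype.card V : ℝ) ∧
      (A.card : ℝ) ≤ (W.card : ℝ) + 6*((cutF G A : ℝ) - (cutF G W : ℝ))/(Fintype.card V : ℝ) := by
  set n : ℕ := Fintype.card V with hn_def
  have hnR : (0:ℝ) < (n:ℝ) := by exact_mod_cast hn
  intro k
  induction k with
  | zero =>
    intro A hA
    have hA0 : cutF G A = 0 := Nat.le_zero.mp hA
    by_cases h1 : ∃ v ∈ A, ((myN G v ∩ A).card : ℝ) ≤ (n:ℝ)/6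
    · obtain ⟨v, hv, hbad⟩ := h1
      have hstep := step_erase G hdeg A v hv hbad
      rw [hA0] at hstep
      have := Nat.cast_nonneg (α := ℝ) (cutF G (A.erase v))
      exfalso; push_cast at hstep; linarith
    · by_cases h2 : ∃ v ∈ Aᶜ, ((myN G v ∩ Aᶜ).card : ℝ) ≤ (n:ℝ)/6
      · obtain ⟨v, hv, hbad⟩ := h2
        have hstep := step_insert G hdeg A v (Finset.mem_compl.mp hv) hbad
        rw [hA0] at hstep
        have := Nat.cast_nonneg (α := ℝ) (cutF G (insert v A))
        exfalso; push_cast at hstep; linarith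
      · push_neg at h1 h2
        exact ⟨A, h1, h2, le_refl _, by simp, by simp⟩
  | succ k ih =>
    intro A hA
    by_cases h1 : ∃ v ∈ A, ((myN G v ∩ A).card : ℝ) ≤ (n:ℝ)/6
    · obtain ⟨v, hv, hbad⟩ := h1
      have hstep := step_erase G hdeg A v hv hbad
      have hlt : cutF G (A.erase v) < cutF G A := by
        have : (cutF G (A.erase v) : ℝ) < (cutF G A : ℝ) := by linarith
        exact_mod_cast this
      obtain ⟨W, hW1, hW2, hW3, hW4, hW5⟩ := ih (A.erase v) (by omega)
      have hcard : ((A.erase v).card : ℝ) = (A.card : ℝ) - 1 :=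
        Finset.cast_card_erase_of_mem hv
      have e2 : (1:ℝ) ≤ 6*((cutF G A : ℝ) - (cutF G (A.erase v) : ℝ))/(n:ℝ) := by
        rw [le_div_iff₀ hnR]; linarith
      have e3 : 6*((cutF G (A.erase v) : ℝ) - (cutF G W : ℝ))/(n:ℝ)
          + 6*((cutF G A : ℝ) - (cutF G (A.erase v) : ℝ))/(n:ℝ)
          = 6*((cutF G A : ℝ) - (cutF G W : ℝ))/(n:ℝ) := by ring
      refine ⟨W, hW1, hW2, le_trans hW3 hlt.le, by linarith, by linarith⟩
    · by_cases h2 : ∃ v ∈ Aᶜ, ((myN G v ∩ Aᶜ).card : ℝ) ≤ (n:ℝ)/6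
      · obtain ⟨v, hv, hbad⟩ := h2
        have hv' : v ∉ A := Finset.mem_compl.mp hv
        have hstep := step_insert G hdeg A v hv' hbad
        have hlt : cutF G (insert v A) < cutF G A := by
          have : (cutF G (insert v A) : ℝ) < (cutF G A : ℝ) := by linarith
          exact_mod_cast this
        obtain ⟨W, hW1, hW2, hW3, hW4, hW5⟩ := ih (insert v A) (by omega)
        have hcard : (((insert v A).card : ℝ)) = (A.card : ℝ) + 1 := by
          rw [Finset.card_insert_of_notMem hv']; push_cast; ring
        have e2 : (1:ℝ) ≤ 6*((cutF G A : ℝ) - (cutF G (insert v A) : ℝ))/(n:ℝ) := by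
          rw [le_div_iff₀ hnR]; linarith
        have e3 : 6*((cutF G (insert v A) : ℝ) - (cutF G W : ℝ))/(n:ℝ)
            + 6*((cutF G A : ℝ) - (cutF G (insert v A) : ℝ))/(n:ℝ)
            = 6*((cutF G A : ℝ) - (cutF G W : ℝ))/(n:ℝ) := by ring
        refine ⟨W, hW1, hW2, le_trans hW3 hlt.le, by linarith, by linarith⟩
      · push_neg at h1 h2
        exact ⟨A, h1, h2, le_refl _, by simp, by simp⟩
end AuxStmt15

set_option maxHeartbeats 1600000 in
/-- producing a balanced sparse cut all of whose vertices have many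
neighbors on their own side. -/
theorem stmt15 [Fintype V] (G : SimpleGraph V) (ν η : ℝ)
    (hν : 0 < ν) (hη : 0 < η) (hcond : 110 * ν + 250 * η < 1/2000)
    (hdeg : ∀ v : V, (Fintype.card V : ℝ)/2 ≤ ((G.neighborSet v).ncard : ℝ))
    (A' B' : Set V) (hdisj : Disjoint A' B')
    (hA' : (1/2 - ν - (3/2) * η) * Fintype.card V ≤ (A'.ncard : ℝ))
    (hB' : (1/2 - ν - (3/2) * η) * Fintype.card V ≤ (B'.ncard : ℝ))
    (hAB : (eXY G A' B' : ℝ) ≤ η * (Fintype.card V : ℝ)^2) :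
    ∃ W : Set V,
      (1/2 - 7 * ν - (33/2) * η) * Fintype.card V ≤ (W.ncard : ℝ) ∧
      (W.ncard : ℝ) ≤ (1/2 + 7 * ν + (33/2) * η) * Fintype.card V ∧
      (∀ v ∈ W, (Fintype.card V : ℝ)/6 < ((G.neighborSet v ∩ W).ncard : ℝ)) ∧
      (∀ v ∈ Wᶜ, (Fintype.card V : ℝ)/6 < ((G.neighborSet v ∩ Wᶜ).ncard : ℝ)) ∧
      (eXY G W Wᶜ : ℝ) ≤ (ν + (5/2) * η) * (Fintype.card V : ℝ)^2 := by
  classical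
  by_cases hn0 : Fintype.card V = 0
  · have hemp : IsEmpty V := Fintype.card_eq_zero_iff.mp hn0
    refine ⟨∅, ?_, ?_, ?_, ?_, ?_⟩
    · simp [hn0]
    · simp [hn0]
    · intro v _; exact (hemp.false v).elim
    · intro v _; exact (hemp.false v).elim
    · have : ({p : V × V | p.1 ∈ (∅ : Set V) ∧ p.2 ∈ (∅ : Set V)ᶜ ∧ G.Adj p.1 p.2}) = ∅ := by
        ext p; simp
      rw [eXY, this, Set.ncard_empty]
      simp [hn0]
  · have hn : 0 < Fintype.card V := Nat.pos_of_ne_zero hn0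
    set nn : ℕ := Fintype.card V with hnn
    have hnR : (0:ℝ) < (nn:ℝ) := by exact_mod_cast hn
    -- neighborSet vs myN
    have hNset : ∀ v : V, G.neighborSet v = ↑(myN G v) := by
      intro v; ext u; simp [myN]
    have hdeg' : ∀ v : V, (nn:ℝ)/2 ≤ ((myN G v).card : ℝ) := by
      intro v
      have := hdeg v
      rwa [hNset v, Set.ncard_coe_finset] at this
    have hdegn : ∀ v : V, (myN G v).card ≤ nn := fun v => Finset.card_le_univ _
    -- finset versions of A', B'
    set AF : Finset V := A'.toFinset with hAF
    set BF : Finset V := B'.toFinset with hBF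
    have hAFc : ↑AF = A' := Set.coe_toFinset A'
    have hBFc : ↑BF = B' := Set.coe_toFinset B'
    have hAcard : (A'.ncard : ℝ) = (AF.card : ℝ) := by
      rw [← hAFc, Set.ncard_coe_finset]
    have hBcard : (B'.ncard : ℝ) = (BF.card : ℝ) := by
      rw [← hBFc, Set.ncard_coe_finset]
    have hdAB : ∀ u : V, u ∈ BF → u ∉ AF := by
      intro u hB hA
      exact Set.disjoint_left.mp hdisj (Set.mem_toFinset.mp hA) (Set.mem_toFinset.mp hB)
    -- leftover vertices and assignment
    set L : Finset V := (AF ∪ BF)ᶜ with hL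
    set LA : Finset V := L.filter
      (fun v => (myN G v ∩ AFᶜ).card ≤ (myN G v ∩ AF).card) with hLA
    set LB : Finset V := L \ LA with hLB
    set A₀ : Finset V := AF ∪ LA with hA₀
    have hLAL : LA ⊆ L := Finset.filter_subset _ _
    clear_value nn AF BF L LA LB A₀
    have hdAFLA : Disjoint AF LA := by
      rw [Finset.disjoint_left]
      intro u hu hu'
      have := hLAL hu'
      simp only [hL, Finset.mem_compl, Finset.mem_union] at this
      exact this (Or.inl hu)
    have hdBFLB : Disjoint BF LB := by
      rw [Finset.disjoint_left]
      intro u hu hu'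
      rw [hLB, Finset.mem_sdiff] at hu'
      have := hu'.1
      simp only [hL, Finset.mem_compl, Finset.mem_union] at this
      exact this (Or.inr hu)
    have hA0c : A₀ᶜ = BF ∪ LB := by
      ext u
      simp only [hA₀, hLB, hLA, Finset.mem_compl, Finset.mem_union, Finset.mem_sdiff,
        Finset.mem_filter, hL]
      have := hdAB u
      tauto
    -- initial cut computation
    have hsum : cutF G A₀ = (∑ v ∈ AF, (myN G v ∩ BF).card)
        + (∑ v ∈ LB, (myN G v ∩ AF).card) + (∑ v ∈ LA, (myN G v ∩ A₀ᶜ).card) := by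
      rw [cutF]
      have hstep1 : ∑ v ∈ A₀, (myN G v ∩ A₀ᶜ).card
          = ∑ v ∈ AF, (myN G v ∩ A₀ᶜ).card + ∑ v ∈ LA, (myN G v ∩ A₀ᶜ).card := by
        rw [hA₀]
        exact Finset.sum_union hdAFLA
      rw [hstep1]
      congr 1
      have h1 : ∀ v ∈ AF, (myN G v ∩ A₀ᶜ).card
          = (myN G v ∩ BF).card + (myN G v ∩ LB).card := by
        intro v _
        rw [hA0c, Finset.inter_union_distrib_left,
          Finset.card_union_of_disjoint]
        exact Finset.disjoint_of_subset_left Finset.inter_subset_right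
          (Finset.disjoint_of_subset_right Finset.inter_subset_right hdBFLB)
      rw [Finset.sum_congr rfl h1, Finset.sum_add_distrib, swap_sum G AF LB]
    -- pointwise bounds on leftover vertices
    have hLAbound : ∀ v ∈ LA, ((myN G v ∩ A₀ᶜ).card : ℝ) ≤ (nn:ℝ)/2 := by
      intro v hv
      rw [hLA, Finset.mem_filter] at hv
      have hcond' : (myN G v ∩ AFᶜ).card ≤ (myN G v ∩ AF).card := hv.2
      have hsub : (myN G v ∩ A₀ᶜ).card ≤ (myN G v ∩ AFᶜ).card := by
        apply Finset.card_le_card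
        apply Finset.inter_subset_inter_left
        apply Finset.compl_subset_compl.mpr
        rw [hA₀]; exact Finset.subset_union_left
      have hsp := card_split G v AF
      have hdn := hdegn v
      have : 2 * (myN G v ∩ A₀ᶜ).card ≤ nn := by omega
      have := (Nat.cast_le (α := ℝ)).mpr this
      push_cast at this
      linarith
    have hLBbound : ∀ v ∈ LB, ((myN G v ∩ AF).card : ℝ) ≤ (nn:ℝ)/2 := by
      intro v hv
      rw [hLB, Finset.mem_sdiff] at hv
      have hcond' : ¬ ((myN G v ∩ AFᶜ).card ≤ (myN G v ∩ AF).card) := by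
        intro hc
        exact hv.2 (by rw [hLA, Finset.mem_filter]; exact ⟨hv.1, hc⟩)
      push_neg at hcond'
      have hsp := card_split G v AF
      have hdn := hdegn v
      have : 2 * (myN G v ∩ AF).card ≤ nn := by omega
      have := (Nat.cast_le (α := ℝ)).mpr this
      push_cast at this
      linarith
    -- size of L
    have hABn : AF.card + BF.card ≤ nn := by
      rw [hnn, ← Finset.card_union_of_disjoint
        (Finset.disjoint_left.mpr (fun u hu hb => hdAB u hb hu))]
      exact Finset.card_le_univ _
    have hLcard : (L.card : ℝ) = (nn:ℝ) - AF.card - BF.card := by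
      have hnat : L.card + (AF.card + BF.card) = nn := by
        rw [hL, Finset.card_compl, Finset.card_union_of_disjoint
          (Finset.disjoint_left.mpr (fun u hu hb => hdAB u hb hu)), ← hnn]
        omega
      have := congrArg (Nat.cast (R := ℝ)) hnat
      push_cast at this
      linarith
    have hLsplit : (LA.card : ℝ) + (LB.card : ℝ) = (L.card : ℝ) := by
      rw [hLB, Finset.card_sdiff_of_subset hLAL]
      rw [Nat.cast_sub (Finset.card_le_card hLAL)]
      ring
    -- bound on E
    have hE : ((∑ v ∈ AF, (myN G v ∩ BF).card : ℕ) : ℝ) ≤ η * (nn:ℝ)^2 := by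
      rw [← eXY_eq G AF BF, hAFc, hBFc]
      exact hAB
    -- sum bounds
    have hsumLA : ((∑ v ∈ LA, (myN G v ∩ A₀ᶜ).card : ℕ) : ℝ) ≤ (LA.card : ℝ) * ((nn:ℝ)/2) := by
      push_cast
      calc ∑ v ∈ LA, ((myN G v ∩ A₀ᶜ).card : ℝ) ≤ ∑ v ∈ LA, (nn:ℝ)/2 :=
        Finset.sum_le_sum hLAbound
      _ = (LA.card : ℝ) * ((nn:ℝ)/2) := by rw [Finset.sum_const, nsmul_eq_mul]
    have hsumLB : ((∑ v ∈ LB, (myN G v ∩ AF).card : ℕ) : ℝ) ≤ (LB.card : ℝ) * ((nn:ℝ)/2) := by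
      push_cast
      calc ∑ v ∈ LB, ((myN G v ∩ AF).card : ℝ) ≤ ∑ v ∈ LB, (nn:ℝ)/2 :=
        Finset.sum_le_sum hLBbound
      _ = (LB.card : ℝ) * ((nn:ℝ)/2) := by rw [Finset.sum_const, nsmul_eq_mul]
    -- assemble initial cut bound
    have hAFlow : (1/2 - ν - (3/2) * η) * (nn:ℝ) ≤ (AF.card : ℝ) := by
      rw [← hAcard]; exact hA'
    have hBFlow : (1/2 - ν - (3/2) * η) * (nn:ℝ) ≤ (BF.card : ℝ) := by
      rw [← hBcard]; exact hB'
    have hLsize : (L.card : ℝ) ≤ (2*ν + 3*η) * (nn:ℝ) := by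
      rw [hLcard]; linarith
    have hcut0 : (cutF G A₀ : ℝ) ≤ (ν + (5/2) * η) * (nn:ℝ)^2 := by
      have hc : (cutF G A₀ : ℝ) = ((∑ v ∈ AF, (myN G v ∩ BF).card : ℕ) : ℝ)
          + ((∑ v ∈ LB, (myN G v ∩ AF).card : ℕ) : ℝ)
          + ((∑ v ∈ LA, (myN G v ∩ A₀ᶜ).card : ℕ) : ℝ) := by
        exact_mod_cast hsum
      have hmul : (L.card : ℝ) * ((nn:ℝ)/2) ≤ ((2*ν + 3*η) * (nn:ℝ)) * ((nn:ℝ)/2) :=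
        mul_le_mul_of_nonneg_right hLsize (by linarith)
      have hring : ((2*ν + 3*η) * (nn:ℝ)) * ((nn:ℝ)/2) = (ν + (3/2)*η) * (nn:ℝ)^2 := by ring
      have hsplit2 : (LA.card : ℝ) * ((nn:ℝ)/2) + (LB.card : ℝ) * ((nn:ℝ)/2)
          = (L.card : ℝ) * ((nn:ℝ)/2) := by rw [← hLsplit]; ring
      linarith [hsumLA, hsumLB, hE]
    -- run the process
    have hdeg'' : ∀ v : V, (Fintype.card V : ℝ)/2 ≤ ((myN G v).card : ℝ) := by
      intro v; rw [← hnn]; exact hdeg' v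
    obtain ⟨W, hW1, hW2, hW3, hW4, hW5⟩ := process G (hnn ▸ hn) hdeg'' (cutF G A₀) A₀ le_rfl
    simp only [← hnn] at hW1 hW2 hW4 hW5
    -- size bounds for A₀
    have hA0low : (1/2 - ν - (3/2) * η) * (nn:ℝ) ≤ (A₀.card : ℝ) := by
      refine le_trans hAFlow ?_
      have hsub : AF ⊆ A₀ := by rw [hA₀]; exact Finset.subset_union_left
      exact_mod_cast Nat.cast_le.mpr (Finset.card_le_card hsub)
    have hA0BF : A₀.card + BF.card ≤ nn := by
      rw [hnn]
      have hd : Disjoint A₀ BF := by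
        rw [Finset.disjoint_left]
        intro u hu hb
        rw [hA₀, Finset.mem_union] at hu
        rcases hu with h | h
        · exact hdAB u hb h
        · have := hLAL h
          simp only [hL, Finset.mem_compl, Finset.mem_union] at this
          exact this (Or.inr hb)
      rw [← Finset.card_union_of_disjoint hd]
      exact Finset.card_le_univ _
    have hA0high : (A₀.card : ℝ) ≤ (1/2 + ν + (3/2) * η) * (nn:ℝ) := by
      have : (A₀.card : ℝ) + (BF.card : ℝ) ≤ (nn:ℝ) := by exact_mod_cast hA0BF
      linarith
    -- deviation bound
    have hDbound : 6*((cutF G A₀ : ℝ) - (cutF G W : ℝ))/(nn:ℝ) ≤ (6*ν + 15*η) * (nn:ℝ) := by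
      rw [div_le_iff₀ hnR]
      have hWnn : (0:ℝ) ≤ (cutF G W : ℝ) := Nat.cast_nonneg _
      have hring : (6*ν + 15*η) * (nn:ℝ) * (nn:ℝ) = 6*((ν + (5/2)*η) * (nn:ℝ)^2) := by ring
      linarith [hcut0]
    have hD0 : 0 ≤ 6*((cutF G A₀ : ℝ) - (cutF G W : ℝ))/(nn:ℝ) := by
      apply div_nonneg _ hnR.le
      have : (cutF G W : ℝ) ≤ (cutF G A₀ : ℝ) := by exact_mod_cast hW3
      linarith
    refine ⟨↑W, ?_, ?_, ?_, ?_, ?_⟩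
    · rw [Set.ncard_coe_finset]
      linarith [hW5]
    · rw [Set.ncard_coe_finset]
      linarith [hW4]
    · intro v hv
      have hv' : v ∈ W := hv
      have heq : G.neighborSet v ∩ ↑W = ↑(myN G v ∩ W) := by
        rw [hNset v, Finset.coe_inter]
      rw [heq, Set.ncard_coe_finset]
      exact hW1 v hv'
    · intro v hv
      have hv' : v ∈ Wᶜ := by
        rw [Finset.mem_compl]
        intro hc
        exact hv (by exact_mod_cast hc)
      have heq : G.neighborSet v ∩ (↑W)ᶜ = ↑(myN G v ∩ Wᶜ) := by
        rw [hNset v, Finset.coe_inter, Finset.coe_compl]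
      rw [heq, Set.ncard_coe_finset]
      exact hW2 v hv'
    · have heq : eXY G ↑W (↑W : Set V)ᶜ = cutF G W := by
        rw [← Finset.coe_compl, eXY_eq G W Wᶜ, cutF]
      rw [heq]
      have : (cutF G W : ℝ) ≤ (cutF G A₀ : ℝ) := by exact_mod_cast hW3
      linarith
end
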